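/- PSD ⊊ PSD[O] ⊊ PSD[T,O], PSD ⊊ PSD[T] ⊊ PSD[T,O], PSD[O] \ PSD[T] ≠ ∅, and PSD[T] \ PSD[O] ≠ ∅, where PSD, PSD[O], PSD[T], PSD[T,O] denote the classes of indexed families learnable in the respective polynomial-size-dataset models. -/

import Mathlib

/-!
Common framework: indexed families of c.e. sets, enumerations (texts),
learning machines with run-time, membership-oracle machines, teachers,
and the learning criteria PRT/PSD/PMC/PCS with oracle/teacher variants.
-/

namespace TeachLearn

attribute [local instance] Classical.propDecidable

/-- The initial segment (finite string) of length `n` of the infinite sequence `f`. -/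
def str (f : ℕ → ℕ) (n : ℕ) : List ℕ := (List.range n).map f

/-- `f` is an enumeration (a text) of the set `A`: its set of values is exactly `A`. -/
def IsEnum (f : ℕ → ℕ) (A : Set ℕ) : Prop := Set.range f = A

/-- An indexed family: a uniformly computably enumerable sequence of nonempty
subsets of `ℕ`. -/
structure IndexedFamily where
  F : ℕ → Set ℕ
  nonempty : ∀ n, (F n).Nonempty
  uce : REPred fun p : ℕ × ℕ => p.1 ∈ F p.2

namespace IndexedFamily

/-- `A` is a member of the indexed family `𝓕`. -/
def Mem (𝓕 : IndexedFamily) (A : Set ℕ) : Prop := ∃ n, 𝓕.F n = A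

/-- The minimal index of `A` in the indexed family `𝓕`. -/
noncomputable def mi (𝓕 : IndexedFamily) (A : Set ℕ) : ℕ := sInf {n | 𝓕.F n = A}

end IndexedFamily

/-- A learning machine: a partial computable map from finite strings to
hypotheses, together with a (cumulative) run-time function.  The run-time is
defined exactly when the machine halts, dominates the length of the input read
as well as the size of the output produced, and is monotone along prefixes
(time is accumulated while reading an enumeration). -/
structure Machine where
  eval : List ℕ →. ℕ
  partrec : Partrec eval
  time : List ℕ →. ℕ
  time_dom : ∀ σ, (time σ).Dom ↔ (eval σ).Dom
  length_le_time : ∀ ⦃σ t⦄, t ∈ time σ → σ.length ≤ t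
  size_le_time : ∀ ⦃σ t h⦄, t ∈ time σ → h ∈ eval σ → Nat.size h ≤ t
  time_mono : ∀ ⦃σ τ s t⦄, σ <+: τ → s ∈ time σ → t ∈ time τ → s ≤ t

/-- A teacher: a computable, prefix-monotone map on finite strings whose
output consists of elements of its input. -/
structure Teacher where
  t : List ℕ → List ℕ
  computable : Computable t
  mono : ∀ ⦃σ τ⦄, σ <+: τ → t σ <+: t τ
  content_sub : ∀ ⦃σ x⦄, x ∈ t σ → x ∈ σ

/-- A learning machine with access to a membership oracle, modeled
interactively: `step (σ, ans)` is the machine's action on input string `σ`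
after having received the list `ans` of oracle answers so far; an even value
`2 * q` asks the oracle whether `q` belongs to the target, while an odd value
`2 * h + 1` halts the interaction with hypothesis `h`.  The run-time dominates
the length of the input read, the number of oracle queries asked, and the size
of the value produced, and is monotone (cumulative). -/
structure OMachine where
  step : List ℕ × List Bool →. ℕ
  partrec : Partrec step
  time : List ℕ × List Bool →. ℕ
  time_dom : ∀ x, (time x).Dom ↔ (step x).Dom
  length_le_time : ∀ ⦃x t⦄, t ∈ time x → x.1.length ≤ t
  queries_le_time : ∀ ⦃x t⦄, t ∈ time x → x.2.length ≤ t
  size_le_time : ∀ ⦃x t v⦄, t ∈ time x → v ∈ step x → Nat.size v ≤ t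
  time_mono : ∀ ⦃σ τ a b s t⦄, σ <+: τ → a <+: b →
    s ∈ time (σ, a) → t ∈ time (τ, b) → s ≤ t

namespace OMachine

/-- The answer lists reachable in the interaction of the machine `M` with the
membership oracle for `A` on the input string `σ`. -/
inductive Reach (M : OMachine) (A : Set ℕ) (σ : List ℕ) : List Bool → Prop
  | nil : Reach M A σ []
  | query {ans q} : Reach M A σ ans → (2 * q) ∈ M.step (σ, ans) →
      Reach M A σ (ans ++ [decide (q ∈ A)])

/-- `M.Out A σ h ans`: on input `σ`, interacting with the membership oracle
for `A`, the machine `M` receives the oracle answers `ans` and halts with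
hypothesis `h`. -/
def Out (M : OMachine) (A : Set ℕ) (σ : List ℕ) (h : ℕ) (ans : List Bool) : Prop :=
  M.Reach A σ ans ∧ (2 * h + 1) ∈ M.step (σ, ans)

/-- With oracle `A`, on the stage inputs `I`, the machine `M` outputs the
hypothesis `h` from stage `n` onwards. -/
def Settles (M : OMachine) (A : Set ℕ) (I : ℕ → List ℕ) (h n : ℕ) : Prop :=
  ∀ m, n ≤ m → ∃ ans, M.Out A (I m) h ans

end OMachine

/-- A teacher for the teacher-and-oracle model: it additionally has access to
the oracle answers received so far by the learner. -/
structure OTeacher where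
  t : List ℕ → List Bool → List ℕ
  computable : Computable₂ t
  mono : ∀ ⦃σ τ a b⦄, σ <+: τ → a <+: b → t σ a <+: t τ b
  content_sub : ∀ ⦃σ a x⦄, x ∈ t σ a → x ∈ σ

/-- On the stage inputs `I`, the machine `M` outputs the hypothesis `h` from
stage `n` onwards. -/
def Machine.Settles (M : Machine) (I : ℕ → List ℕ) (h n : ℕ) : Prop :=
  ∀ m, n ≤ m → M.eval (I m) = Part.some h

/-- Settling for the teacher-and-oracle model: `hist m` records the oracle
answers the learner received at stage `m - 1`, which the teacher sees at
stage `m`.  From stage `n` on, the learner outputs `h`. -/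
def OMachine.TOSettles (M : OMachine) (T : OTeacher) (A : Set ℕ) (f : ℕ → ℕ)
    (hist : ℕ → List Bool) (h n : ℕ) : Prop :=
  ∀ m, n ≤ m → M.Out A (T.t (str f m) (hist m)) h (hist (m + 1))

/-! ### Polynomial run-time (PRT) -/

/-- `M` converges to the hypothesis `h` on the stage inputs `I` within fewer
than `B` computation steps. -/
def Machine.PRTIdentifies (M : Machine) (I : ℕ → List ℕ) (h B : ℕ) : Prop :=
  ∃ n, M.Settles I h n ∧ ∃ t, t ∈ M.time (I n) ∧ t < B

/-- Oracle version of `Machine.PRTIdentifies`; the run-time bound also bounds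
the oracle use (by `queries_le_time`). -/
def OMachine.PRTIdentifies (M : OMachine) (A : Set ℕ) (I : ℕ → List ℕ) (h B : ℕ) : Prop :=
  ∃ n, M.Settles A I h n ∧
    ∃ ans t, M.Out A (I n) h ans ∧ t ∈ M.time (I n, ans) ∧ t < B

/-- `M` PRT-learns `𝓕` with polynomial bound `p`. -/
def PRTLearnsWith (M : Machine) (p : Polynomial ℕ) (𝓕 : IndexedFamily) : Prop :=
  ∀ A, 𝓕.Mem A → ∀ f, IsEnum f A →
    ∃ h, 𝓕.F h = A ∧ M.PRTIdentifies (str f) h (p.eval (𝓕.mi A))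

/-- `𝓕` is PRT-learnable. -/
def PRT (𝓕 : IndexedFamily) : Prop := ∃ M p, PRTLearnsWith M p 𝓕

/-- The learner-teacher pair `(M, T)` PRT-learns `𝓕` with polynomial bound `p`. -/
def PRTTLearnsWith (M : Machine) (T : Teacher) (p : Polynomial ℕ) (𝓕 : IndexedFamily) : Prop :=
  ∀ A, 𝓕.Mem A → ∀ f, IsEnum f A →
    ∃ h, 𝓕.F h = A ∧ M.PRTIdentifies (fun m => T.t (str f m)) h (p.eval (𝓕.mi A))

/-- `𝓕` is PRT[T]-learnable. -/
def PRTT (𝓕 : IndexedFamily) : Prop := ∃ M T p, PRTTLearnsWith M T p 𝓕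

/-- `𝓕` is PRT[O]-learnable. -/
def PRTO (𝓕 : IndexedFamily) : Prop :=
  ∃ (M : OMachine) (p : Polynomial ℕ), ∀ A, 𝓕.Mem A → ∀ f, IsEnum f A →
    ∃ h, 𝓕.F h = A ∧ M.PRTIdentifies A (str f) h (p.eval (𝓕.mi A))

/-- `𝓕` is PRT[T,O]-learnable. -/
def PRTTO (𝓕 : IndexedFamily) : Prop :=
  ∃ (M : OMachine) (T : OTeacher) (p : Polynomial ℕ),
    ∀ A, 𝓕.Mem A → ∀ f, IsEnum f A →
      ∃ h, 𝓕.F h = A ∧ ∃ hist : ℕ → List Bool, hist 0 = [] ∧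
        ∃ n, M.TOSettles T A f hist h n ∧
          ∃ t, t ∈ M.time (T.t (str f n) (hist n), hist (n + 1)) ∧ t < p.eval (𝓕.mi A)

/-! ### Polynomial size dataset (PSD) -/

/-- `M` converges to `h` on an initial stage whose input contains fewer than
`B` distinct elements. -/
def Machine.PSDIdentifies (M : Machine) (I : ℕ → List ℕ) (h B : ℕ) : Prop :=
  ∃ n, M.Settles I h n ∧ (I n).toFinset.card < B

/-- Oracle version of `Machine.PSDIdentifies`; the oracle use is also bounded. -/
def OMachine.PSDIdentifies (M : OMachine) (A : Set ℕ) (I : ℕ → List ℕ) (h B : ℕ) : Prop :=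
  ∃ n, M.Settles A I h n ∧ (I n).toFinset.card < B ∧
    ∃ ans, M.Out A (I n) h ans ∧ ans.length ≤ B

/-- `𝓕` is PSD-learnable. -/
def PSD (𝓕 : IndexedFamily) : Prop :=
  ∃ (M : Machine) (p : Polynomial ℕ), ∀ A, 𝓕.Mem A → ∀ f, IsEnum f A →
    ∃ h, 𝓕.F h = A ∧ M.PSDIdentifies (str f) h (p.eval (𝓕.mi A))

/-- `𝓕` is PSD[T]-learnable. -/
def PSDT (𝓕 : IndexedFamily) : Prop :=
  ∃ (M : Machine) (T : Teacher) (p : Polynomial ℕ), ∀ A, 𝓕.Mem A → ∀ f, IsEnum f A →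
    ∃ h, 𝓕.F h = A ∧ M.PSDIdentifies (fun m => T.t (str f m)) h (p.eval (𝓕.mi A))

/-- `𝓕` is PSD[O]-learnable. -/
def PSDO (𝓕 : IndexedFamily) : Prop :=
  ∃ (M : OMachine) (p : Polynomial ℕ), ∀ A, 𝓕.Mem A → ∀ f, IsEnum f A →
    ∃ h, 𝓕.F h = A ∧ M.PSDIdentifies A (str f) h (p.eval (𝓕.mi A))

/-- `𝓕` is PSD[T,O]-learnable. -/
def PSDTO (𝓕 : IndexedFamily) : Prop :=
  ∃ (M : OMachine) (T : OTeacher) (p : Polynomial ℕ),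
    ∀ A, 𝓕.Mem A → ∀ f, IsEnum f A →
      ∃ h, 𝓕.F h = A ∧ ∃ hist : ℕ → List Bool, hist 0 = [] ∧
        ∃ n, M.TOSettles T A f hist h n ∧
          (T.t (str f n) (hist n)).toFinset.card < p.eval (𝓕.mi A) ∧
          (hist (n + 1)).length ≤ p.eval (𝓕.mi A)

/-! ### Polynomial mind-changes (PMC) -/

/-- The set of positions at which the hypothesis stream `g` changes its mind. -/
def MindChanges (g : ℕ → ℕ) : Set ℕ := {i | g i ≠ g (i + 1)}

/-- The hypothesis stream `g` changes its mind at most `B` times, and the only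
hypothesis appearing infinitely often in it is an index of `A` in `𝓕`. -/
def PMCCriterion (𝓕 : IndexedFamily) (A : Set ℕ) (g : ℕ → ℕ) (B : ℕ) : Prop :=
  (MindChanges g).Finite ∧ (MindChanges g).ncard ≤ B ∧
    ∀ h, {i | g i = h}.Infinite → 𝓕.F h = A

/-- `𝓕` is PMC-learnable. -/
def PMC (𝓕 : IndexedFamily) : Prop :=
  ∃ (M : Machine) (p : Polynomial ℕ), ∀ A, 𝓕.Mem A → ∀ f, IsEnum f A →
    ∃ g : ℕ → ℕ, (∀ m, M.eval (str f m) = Part.some (g m)) ∧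
      PMCCriterion 𝓕 A g (p.eval (𝓕.mi A))

/-- `𝓕` is PMC[T]-learnable. -/
def PMCT (𝓕 : IndexedFamily) : Prop :=
  ∃ (M : Machine) (T : Teacher) (p : Polynomial ℕ), ∀ A, 𝓕.Mem A → ∀ f, IsEnum f A →
    ∃ g : ℕ → ℕ, (∀ m, M.eval (T.t (str f m)) = Part.some (g m)) ∧
      PMCCriterion 𝓕 A g (p.eval (𝓕.mi A))

/-- `𝓕` is PMC[O]-learnable. -/
def PMCO (𝓕 : IndexedFamily) : Prop :=
  ∃ (M : OMachine) (p : Polynomial ℕ), ∀ A, 𝓕.Mem A → ∀ f, IsEnum f A →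
    ∃ g : ℕ → ℕ,
      (∀ m, ∃ ans, M.Out A (str f m) (g m) ans ∧ ans.length ≤ p.eval (𝓕.mi A)) ∧
      PMCCriterion 𝓕 A g (p.eval (𝓕.mi A))

/-- `𝓕` is PMC[T,O]-learnable. -/
def PMCTO (𝓕 : IndexedFamily) : Prop :=
  ∃ (M : OMachine) (T : OTeacher) (p : Polynomial ℕ),
    ∀ A, 𝓕.Mem A → ∀ f, IsEnum f A →
      ∃ hist : ℕ → List Bool, hist 0 = [] ∧
        ∃ g : ℕ → ℕ,
          (∀ m, M.Out A (T.t (str f m) (hist m)) (g m) (hist (m + 1)) ∧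
            (hist (m + 1)).length ≤ p.eval (𝓕.mi A)) ∧
          PMCCriterion 𝓕 A g (p.eval (𝓕.mi A))

/-! ### Polynomial size characteristic sample (PCS) -/

/-- `𝓕` is PCS-learnable: there are a machine, a polynomial bound and an
assignment of a characteristic sample to each member of `𝓕`. -/
def PCS (𝓕 : IndexedFamily) : Prop :=
  ∃ (M : Machine) (p : Polynomial ℕ) (S : Set ℕ → Finset ℕ),
    ∀ A, 𝓕.Mem A → ↑(S A) ⊆ A ∧ (S A).card < p.eval (𝓕.mi A) ∧
      ∃ e, 𝓕.F e = A ∧ ∀ f, IsEnum f A → ∀ n, (∀ x ∈ S A, x ∈ str f n) →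
        M.eval (str f n) = Part.some e

/-- `𝓕` is PCS[O]-learnable. -/
def PCSO (𝓕 : IndexedFamily) : Prop :=
  ∃ (M : OMachine) (p : Polynomial ℕ) (S : Set ℕ → Finset ℕ),
    ∀ A, 𝓕.Mem A → ↑(S A) ⊆ A ∧ (S A).card < p.eval (𝓕.mi A) ∧
      ∃ e, 𝓕.F e = A ∧ ∀ f, IsEnum f A → ∀ n, (∀ x ∈ S A, x ∈ str f n) →
        ∃ ans, M.Out A (str f n) e ans ∧ ans.length ≤ p.eval (𝓕.mi A)

/-- `𝓕` is PCS[T]-learnable: the characteristic sample must eventually appear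
in the teacher's output stream, after which the learner locks onto a correct
index. -/
def PCST (𝓕 : IndexedFamily) : Prop :=
  ∃ (M : Machine) (T : Teacher) (p : Polynomial ℕ) (S : Set ℕ → Finset ℕ),
    ∀ A, 𝓕.Mem A → ↑(S A) ⊆ A ∧ (S A).card < p.eval (𝓕.mi A) ∧
      ∃ e, 𝓕.F e = A ∧ ∀ f, IsEnum f A →
        (∃ n, ∀ x ∈ S A, x ∈ T.t (str f n)) ∧
        ∀ n, (∀ x ∈ S A, x ∈ T.t (str f n)) → M.eval (T.t (str f n)) = Part.some e

/-- `𝓕` is PCS[T,O]-learnable. -/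
def PCSTO (𝓕 : IndexedFamily) : Prop :=
  ∃ (M : OMachine) (T : OTeacher) (p : Polynomial ℕ) (S : Set ℕ → Finset ℕ),
    ∀ A, 𝓕.Mem A → ↑(S A) ⊆ A ∧ (S A).card < p.eval (𝓕.mi A) ∧
      ∃ e, 𝓕.F e = A ∧ ∀ f, IsEnum f A →
        ∃ hist : ℕ → List Bool, hist 0 = [] ∧
          (∃ n, ∀ x ∈ S A, x ∈ T.t (str f n) (hist n)) ∧
          ∀ n, (∀ x ∈ S A, x ∈ T.t (str f n) (hist n)) →
            M.Out A (T.t (str f n) (hist n)) e (hist (n + 1)) ∧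
            (hist (n + 1)).length ≤ p.eval (𝓕.mi A)

/-!
The inclusions are simulations: a learner without oracle is an oracle learner that never asks,
any learner pairs with the identity teacher, and any teacher with one ignoring oracle answers.

Two families separate the models. In `coSingletons`, `ℕ` and the sets `ℕ \ {k}`, an oracle learner
finds `k` by asking `0, 1, …, k`. No teacher helps a learner without oracle: it has a locking
string for `ℕ`, and a text of `ℕ \ {k}` starting with it, `k` not in it, keeps it on `ℕ`.

In `haltingMarkers`, the sets `evens ∪ {2 ⟪e, s⟫ + 1 | program e halts within s steps}`, a
teacher passing on only the odd data shows the learner a marker, which names the target, as soon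
as one appears. An oracle learner with bound `p` fails: fed the first `B ≥ p (e + 1)` even numbers
and then a marker of a halting `e`, it settles within `B` data, before the marker, so its run on
these even numbers must query a marker to tell the target from `evens`. Running it against the
decidable oracle for `evens` and inspecting its queries would decide the halting problem.
-/

lemma length_str (f : ℕ → ℕ) (n : ℕ) : (str f n).length = n := by
  simp [str]

lemma getElem_str (f : ℕ → ℕ) {n i : ℕ} (h : i < (str f n).length) : (str f n)[i] = f i := by
  simp [str]

lemma mem_str {f : ℕ → ℕ} {n x : ℕ} : x ∈ str f n ↔ ∃ i < n, f i = x := by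
  simp [str]

lemma str_succ (f : ℕ → ℕ) (n : ℕ) : str f (n + 1) = str f n ++ [f n] := by
  simp [str, List.range_succ]

lemma str_eq_take (f : ℕ → ℕ) {m n : ℕ} (h : m ≤ n) : str f m = (str f n).take m := by
  simp [str, ← List.map_take, List.take_range, h]

lemma str_prefix_str (f : ℕ → ℕ) {m n : ℕ} (h : m ≤ n) : str f m <+: str f n :=
  str_eq_take f h ▸ List.take_prefix _ _

lemma IsEnum.mem {f : ℕ → ℕ} {A : Set ℕ} (hf : IsEnum f A) {n x : ℕ} (hx : x ∈ str f n) :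
    x ∈ A := by
  obtain ⟨i, -, rfl⟩ := mem_str.1 hx
  exact hf ▸ Set.mem_range_self i

def prepend (σ : List ℕ) (g : ℕ → ℕ) (j : ℕ) : ℕ :=
  if h : j < σ.length then σ[j] else g (j - σ.length)

lemma str_prepend (σ : List ℕ) (g : ℕ → ℕ) {m : ℕ} (hm : m ≤ σ.length) :
    str (prepend σ g) m = σ.take m :=
  List.ext_getElem (by simp [length_str, hm]) fun j hj _ => by
    rw [getElem_str, List.getElem_take]
    simp only [length_str] at hj
    simp [prepend, show j < σ.length by omega]

lemma isEnum_prepend {σ : List ℕ} {g : ℕ → ℕ} {A : Set ℕ} (hg : IsEnum g A)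
    (hσ : ∀ x ∈ σ, x ∈ A) : IsEnum (prepend σ g) A := by
  apply subset_antisymm
  · rintro _ ⟨j, rfl⟩
    unfold prepend
    split
    · exact hσ _ (List.getElem_mem _)
    · exact hg ▸ Set.mem_range_self _
  · rw [← hg]
    rintro _ ⟨j, rfl⟩
    exact ⟨j + σ.length, by simp [prepend]⟩

lemma exists_isEnum_prepend {σ : List ℕ} {A : Set ℕ} (hσ : ∀ x ∈ σ, x ∈ A) (hA : A.Nonempty) :
    ∃ f, IsEnum f A ∧ ∀ m ≤ σ.length, str f m = σ.take m := by
  obtain ⟨g, hg⟩ := A.to_countable.exists_eq_range hA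
  exact ⟨prepend σ g, isEnum_prepend hg.symm hσ, fun m hm => str_prepend σ g hm⟩

lemma le_of_nodup_str {f : ℕ → ℕ} {B n : ℕ} (hnd : (str f (B + 1)).Nodup)
    (hn : (str f n).toFinset.card ≤ B) : n ≤ B := by
  by_contra! hlt
  have := Finset.card_le_card fun x hx =>
    List.mem_toFinset.2 ((str_prefix_str f hlt).subset (List.mem_toFinset.1 hx))
  rw [List.toFinset_card_of_nodup hnd, length_str] at this
  omega

lemma exists_str_eq_of_prefix_chain {ρ : ℕ → List ℕ} (hpre : ∀ i, ρ i <+: ρ (i + 1))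
    (hlen : ∀ i, (ρ i).length < (ρ (i + 1)).length) :
    ∃ f : ℕ → ℕ, ∀ i, str f (ρ i).length = ρ i := by
  have hmono : ∀ i j, i ≤ j → ρ i <+: ρ j := fun i j hij =>
    Nat.le_induction (List.prefix_refl _) (fun j _ ih => ih.trans (hpre j)) j hij
  have hlt : ∀ i, i < (ρ (i + 1)).length := fun i => by
    induction i with
    | zero => exact (Nat.zero_le _).trans_lt (hlen 0)
    | succ i ih => have := hlen (i + 1); omega
  refine ⟨fun j => (ρ (j + 1))[j]'(hlt j), fun i => List.ext_getElem (length_str _ _) ?_⟩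
  intro j hj hj'
  rw [getElem_str]
  rcases le_total (j + 1) i with h | h
  · exact (hmono _ _ h).getElem (hlt j)
  · exact ((hmono _ _ h).getElem hj').symm

lemma exists_locking_string {P : List ℕ → Prop}
    (hP : ∀ f, IsEnum f Set.univ → ∃ n, ∀ m, n ≤ m → P (str f m)) :
    ∃ σ, ∀ τ, P (σ ++ τ) := by
  by_contra! hext
  choose ext hext using hext
  -- writing `i` makes the text cover `ℕ`; appending `ext _` makes `P` fail at every `ρ (i + 1)`
  let ρ : ℕ → List ℕ := fun i => Nat.rec [] (fun i ρi => ρi ++ [i] ++ ext (ρi ++ [i])) i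
  have hρ : ∀ i, ρ (i + 1) = ρ i ++ [i] ++ ext (ρ i ++ [i]) := fun _ => rfl
  obtain ⟨f, hf⟩ := exists_str_eq_of_prefix_chain (ρ := ρ)
    (fun i => by rw [hρ, List.append_assoc]; exact List.prefix_append _ _)
    (fun i => by simp [hρ])
  have hfρ : ∀ i, f (ρ i).length = i := fun i => by
    have h := getElem_str f (n := (ρ (i + 1)).length) (i := (ρ i).length) (by simp [length_str, hρ])
    rw [List.getElem_of_eq (hf (i + 1))] at h
    simpa [hρ] using h.symm
  have hlen : ∀ i, i ≤ (ρ i).length := fun i => by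
    induction i with
    | zero => exact Nat.zero_le _
    | succ i ih => simp only [hρ, List.length_append, List.length_singleton]; omega
  obtain ⟨n, hn⟩ := hP f (Set.eq_univ_of_forall fun i => ⟨_, hfρ i⟩)
  apply hext (ρ n ++ [n])
  rw [← hρ, ← hf (n + 1)]
  exact hn _ ((Nat.le_succ n).trans (hlen _))

lemma monotone_polynomial_eval (p : Polynomial ℕ) : Monotone fun n : ℕ => p.eval n := by
  induction p using Polynomial.induction_on with
  | C a => exact fun _ _ _ => by simp
  | add p q hp hq => simpa using hp.add hq
  | monomial n a _ =>
    intro x y hxy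
    simpa using Nat.mul_le_mul_left a (Nat.pow_le_pow_left hxy (n + 1))

lemma primrec_polynomial_eval (p : Polynomial ℕ) : Primrec fun n : ℕ => p.eval n := by
  induction p using Polynomial.induction_on with
  | C a => simpa using Primrec.const a
  | add p q hp hq => simpa using Primrec.nat_add.comp hp hq
  | monomial n a h =>
    refine (Primrec.nat_mul.comp h Primrec.id).of_eq fun x => ?_
    simp [pow_succ, mul_assoc]

namespace IndexedFamily

def ofBool (p : ℕ → ℕ → Bool) (hp : Computable₂ p) (hne : ∀ n, ∃ x, p x n = true) :
    IndexedFamily where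
  F n := {x | p x n = true}
  nonempty := hne
  uce := ComputablePred.to_re (ComputablePred.computable_iff.2 ⟨_, hp, rfl⟩)

lemma mi_le {𝓕 : IndexedFamily} {A : Set ℕ} {n : ℕ} (h : 𝓕.F n = A) : 𝓕.mi A ≤ n :=
  Nat.sInf_le h

lemma mi_apply_of_injective {𝓕 : IndexedFamily} (h : Function.Injective 𝓕.F) (n : ℕ) :
    𝓕.mi (𝓕.F n) = n :=
  le_antisymm (mi_le rfl) (le_csInf ⟨n, rfl⟩ fun _ hm => (h hm).ge)

end IndexedFamily

lemma size_le_self (n : ℕ) : Nat.size n ≤ n :=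
  Nat.size_le.2 Nat.lt_two_pow_self

lemma size_two_mul_add_one (n : ℕ) : Nat.size (2 * n + 1) = Nat.size n + 1 := by
  simpa [Nat.bit] using Nat.size_bit (b := true) (n := n) (by simp [Nat.bit])

def Machine.toOMachine (M : Machine) : OMachine where
  step x := (M.eval x.1).map fun h => 2 * h + 1
  partrec := (M.partrec.comp Computable.fst).map
    (Primrec.nat_double_succ.to_comp.comp Computable.snd).to₂
  time x := (M.time x.1).map fun t => t + x.2.length + 1
  time_dom x := M.time_dom x.1
  length_le_time := by
    rintro ⟨σ, a⟩ t ht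
    obtain ⟨s, hs, rfl⟩ := (Part.mem_map_iff _).1 ht
    have : σ.length ≤ s := M.length_le_time hs
    simp only
    omega
  queries_le_time := by
    rintro ⟨σ, a⟩ t ht
    obtain ⟨s, -, rfl⟩ := (Part.mem_map_iff _).1 ht
    simp only
    omega
  size_le_time := by
    rintro ⟨σ, a⟩ t v ht hv
    obtain ⟨s, hs, rfl⟩ := (Part.mem_map_iff _).1 ht
    obtain ⟨h, hh, rfl⟩ := (Part.mem_map_iff _).1 hv
    have := M.size_le_time hs hh
    simp only [size_two_mul_add_one]
    omega
  time_mono := by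
    rintro σ τ a b _ _ hστ hab hσ hτ
    obtain ⟨s, hs, rfl⟩ := (Part.mem_map_iff _).1 hσ
    obtain ⟨t, ht, rfl⟩ := (Part.mem_map_iff _).1 hτ
    have := M.time_mono hστ hs ht
    have := hab.length_le
    simp only
    omega

lemma Machine.toOMachine_out {M : Machine} {A : Set ℕ} {σ : List ℕ} {h : ℕ}
    (hM : M.eval σ = Part.some h) : M.toOMachine.Out A σ h [] :=
  ⟨.nil, by simp [Machine.toOMachine, hM]⟩

def Teacher.id : Teacher where
  t := _root_.id
  computable := Computable.id
  mono _ _ h := h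
  content_sub _ _ h := h

def Teacher.toOTeacher (T : Teacher) : OTeacher where
  t σ _ := T.t σ
  computable := (T.computable.comp Computable.fst).to₂
  mono _ _ _ _ h _ := T.mono h
  content_sub _ _ _ h := T.content_sub h

namespace OMachine

variable {M : OMachine} {A : Set ℕ} {σ : List ℕ}

lemma Reach.exists_query {a b : List Bool} {c : Bool} (h : M.Reach A σ a) (hb : b ++ [c] <+: a) :
    ∃ q, 2 * q ∈ M.step (σ, b) ∧ c = decide (q ∈ A) := by
  induction h with
  | nil => simp at hb
  | @query a q _ hq ih =>
    rcases List.prefix_concat_iff.1 hb with h | h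
    · obtain ⟨rfl, h⟩ := List.append_inj' h rfl
      exact ⟨q, hq, by simpa using h⟩
    · exact ih h

lemma Reach.prefix_or_prefix {a b : List Bool} (ha : M.Reach A σ a) (hb : M.Reach A σ b) :
    a <+: b ∨ b <+: a := by
  induction hb with
  | nil => exact .inr List.nil_prefix
  | @query b q _ hq ih =>
    rcases ih with h | h
    · exact .inl (h.trans (List.prefix_append _ _))
    rcases h.length_le.eq_or_lt with hlen | hlen
    · exact .inl (h.eq_of_length hlen ▸ List.prefix_append _ _)
    · obtain ⟨q', hq', hc⟩ := ha.exists_query (List.concat_get_prefix h hlen)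
      obtain rfl : q = q' := by have := Part.mem_unique hq hq'; omega
      exact .inr (hc ▸ List.concat_get_prefix h hlen)

lemma Out.unique {h h' : ℕ} {a a' : List Bool} (h₁ : M.Out A σ h a) (h₂ : M.Out A σ h' a') :
    h = h' := by
  wlog hp : a <+: a' generalizing h h' a a'
  · exact (this h₂ h₁ ((h₁.1.prefix_or_prefix h₂.1).resolve_left hp)).symm
  rcases hp.length_le.eq_or_lt with hlen | hlen
  · rw [hp.eq_of_length hlen] at h₁
    have := Part.mem_unique h₁.2 h₂.2
    omega
  · -- `M` halts after the answers `a`, yet the longer run `a'` asks a query there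
    obtain ⟨q, hq, -⟩ := h₂.1.exists_query (List.concat_get_prefix hp hlen)
    have := Part.mem_unique h₁.2 hq
    omega

variable (M) (c : ℕ → Bool)

/-- The query lists of the runs of `M` on `σ` against the oracle answering `c q` to `q`. -/
inductive QueryRun (σ : List ℕ) : List ℕ → Prop
  | nil : QueryRun σ []
  | query {qs q} : QueryRun σ qs → 2 * q ∈ M.step (σ, qs.map c) → QueryRun σ (qs ++ [q])

/-- One step of the run of `M` against the oracle `c`, on the input and the queries so far. -/
def simStep (x : List ℕ × List ℕ) : Part ((ℕ × List ℕ) ⊕ (List ℕ × List ℕ)) :=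
  (M.step (x.1, x.2.map c)).map fun v =>
    if v % 2 = 1 then .inl (v / 2, x.2) else .inr (x.1, x.2 ++ [v / 2])

/-- The hypothesis output by `M` on `σ` against the oracle `c`, with the queries it asked. -/
def simulate (σ : List ℕ) : Part (ℕ × List ℕ) :=
  PFun.fix (M.simStep c) (σ, [])

lemma partrec_simulate (hc : Primrec c) : Partrec (M.simulate c) := by
  have hin : Computable fun x : List ℕ × List ℕ => (x.1, x.2.map c) :=
    (Primrec.fst.pair (Primrec.list_map Primrec.snd (hc.comp Primrec.snd).to₂)).to_comp
  have hout : Primrec₂ fun (x : List ℕ × List ℕ) (v : ℕ) =>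
      (if v % 2 = 1 then .inl (v / 2, x.2) else .inr (x.1, x.2 ++ [v / 2]) :
        (ℕ × List ℕ) ⊕ (List ℕ × List ℕ)) :=
    Primrec.ite (Primrec.eq.comp (Primrec.nat_mod.comp Primrec.snd (Primrec.const 2))
        (Primrec.const 1))
      (Primrec.sumInl.comp ((Primrec.nat_div.comp Primrec.snd (Primrec.const 2)).pair
        (Primrec.snd.comp Primrec.fst)))
      (Primrec.sumInr.comp ((Primrec.fst.comp Primrec.fst).pair
        (Primrec.list_concat.comp (Primrec.snd.comp Primrec.fst)
          (Primrec.nat_div.comp Primrec.snd (Primrec.const 2)))))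
  exact ((M.partrec.comp hin).map hout.to_comp).fix.comp
    (Computable.id.pair (Computable.const []))

variable {M c}

lemma QueryRun.mem_simulate {qs : List ℕ} {h : ℕ} (hr : M.QueryRun c σ qs)
    (hh : 2 * h + 1 ∈ M.step (σ, qs.map c)) : (h, qs) ∈ M.simulate c σ := by
  suffices ∀ r, r ∈ PFun.fix (M.simStep c) (σ, qs) → r ∈ M.simulate c σ from
    this _ (PFun.mem_fix_iff.2 (.inl ((Part.mem_map_iff _).2
      ⟨_, hh, by rw [if_pos (by omega), show (2 * h + 1) / 2 = h by omega]⟩)))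
  clear hh
  induction hr with
  | nil => exact fun _ => id
  | @query qs q _ hq ih =>
    exact fun r hr => ih r (PFun.mem_fix_iff.2 (.inr ⟨_, (Part.mem_map_iff _).2
      ⟨_, hq, by rw [if_neg (by omega), show 2 * q / 2 = q by omega]⟩, hr⟩))

lemma queryRun_of_mem_simulate {qs : List ℕ} {h : ℕ} (hs : (h, qs) ∈ M.simulate c σ) :
    M.QueryRun c σ qs ∧ 2 * h + 1 ∈ M.step (σ, qs.map c) := by
  suffices ∀ x : List ℕ × List ℕ, (h, qs) ∈ PFun.fix (M.simStep c) x → x.1 = σ →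
      M.QueryRun c σ x.2 → M.QueryRun c σ qs ∧ 2 * h + 1 ∈ M.step (σ, qs.map c) from
    this _ hs rfl .nil
  intro x hx
  refine PFun.fixInduction (C := fun x => x.1 = σ → M.QueryRun c σ x.2 →
    M.QueryRun c σ qs ∧ 2 * h + 1 ∈ M.step (σ, qs.map c)) hx fun x hx ih => ?_
  rintro rfl hrun
  rcases PFun.mem_fix_iff.1 hx with hstop | ⟨y, hy, -⟩
  · obtain ⟨v, hv, hvh⟩ := (Part.mem_map_iff _).1 hstop
    split_ifs at hvh with hodd
    obtain ⟨rfl, rfl⟩ := Prod.mk.inj (Sum.inl.inj hvh)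
    exact ⟨hrun, by rwa [show 2 * (v / 2) + 1 = v by omega]⟩
  · obtain ⟨v, hv, hvy⟩ := (Part.mem_map_iff _).1 hy
    split_ifs at hvy with hodd
    obtain rfl := Sum.inr.inj hvy
    exact ih _ hy rfl (.query hrun (by rwa [show 2 * (v / 2) = v by omega]))

lemma Reach.exists_queryRun {a : List Bool} (h : M.Reach {q | c q = true} σ a) :
    ∃ qs, M.QueryRun c σ qs ∧ qs.map c = a := by
  induction h with
  | nil => exact ⟨[], .nil, rfl⟩
  | @query a q _ hq ih =>
    obtain ⟨qs, hr, rfl⟩ := ih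
    exact ⟨qs ++ [q], .query hr hq, by simp⟩

lemma QueryRun.reach {qs : List ℕ} (hr : M.QueryRun c σ qs) (hA : ∀ q ∈ qs, q ∈ A ↔ c q = true) :
    M.Reach A σ (qs.map c) := by
  induction hr with
  | nil => exact .nil
  | @query qs q _ hq ih =>
    have hcq : decide (q ∈ A) = c q := Bool.eq_iff_iff.2 (by simpa using hA q (by simp))
    simpa [hcq] using Reach.query (ih fun q' hq' => hA q' (List.mem_append_left _ hq')) hq

lemma Out.mem_simulate {h : ℕ} {a : List Bool} (hout : M.Out {q | c q = true} σ h a) :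
    ∃ qs, (h, qs) ∈ M.simulate c σ := by
  obtain ⟨qs, hr, rfl⟩ := hout.1.exists_queryRun
  exact ⟨qs, hr.mem_simulate hout.2⟩

lemma eq_of_mem_simulate_of_out {qs : List ℕ} {h h' : ℕ} {a : List Bool}
    (hs : (h, qs) ∈ M.simulate c σ) (hA : ∀ q ∈ qs, q ∈ A ↔ c q = true)
    (hout : M.Out A σ h' a) : h' = h :=
  have ⟨hr, hh⟩ := queryRun_of_mem_simulate hs
  hout.unique ⟨hr.reach hA, hh⟩

end OMachine

theorem PSD.psdo {𝓕 : IndexedFamily} (h : PSD 𝓕) : PSDO 𝓕 := by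
  obtain ⟨M, p, hM⟩ := h
  refine ⟨M.toOMachine, p, fun A hA f hf => ?_⟩
  obtain ⟨h, hFh, n, hset, hcard⟩ := hM A hA f hf
  exact ⟨h, hFh, n, fun m hm => ⟨[], Machine.toOMachine_out (hset m hm)⟩, hcard, [],
    Machine.toOMachine_out (hset n le_rfl), Nat.zero_le _⟩

theorem PSD.psdt {𝓕 : IndexedFamily} (h : PSD 𝓕) : PSDT 𝓕 := by
  obtain ⟨M, p, hM⟩ := h
  exact ⟨M, Teacher.id, p, hM⟩

theorem PSDT.psdto {𝓕 : IndexedFamily} (h : PSDT 𝓕) : PSDTO 𝓕 := by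
  obtain ⟨M, T, p, hM⟩ := h
  refine ⟨M.toOMachine, T.toOTeacher, p, fun A hA f hf => ?_⟩
  obtain ⟨h, hFh, n, hset, hcard⟩ := hM A hA f hf
  exact ⟨h, hFh, fun _ => [], rfl, n, fun m hm => Machine.toOMachine_out (hset m hm), hcard,
    Nat.zero_le _⟩

theorem PSDO.psdto {𝓕 : IndexedFamily} (h : PSDO 𝓕) : PSDTO 𝓕 := by
  obtain ⟨M, p, hM⟩ := h
  refine ⟨M, Teacher.id.toOTeacher, p, fun A hA f hf => ?_⟩
  obtain ⟨h, hFh, n, hset, hcard, ansₙ, houtₙ, hlenₙ⟩ := hM A hA f hf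
  -- at stage `n` the learner must receive the short answer list `ansₙ`
  choose ans hans using fun m (hm : n ≤ m) => hset m hm
  let hist : ℕ → List Bool := fun m =>
    if m = n + 1 then ansₙ else if hm : n + 1 ≤ m then ans (m - 1) (by omega) else []
  refine ⟨h, hFh, hist, by simp [hist], n, fun m hm => ?_, hcard, by simpa [hist] using hlenₙ⟩
  change M.Out A (str f m) h (hist (m + 1))
  rcases hm.eq_or_lt with rfl | hlt
  · simpa [hist] using houtₙ
  · simpa [hist, show m ≠ n by omega, hm] using hans m hm

/-- `ℕ` (index `0`) together with the sets `ℕ \ {k}` (index `k + 1`). -/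
def coSingletons : IndexedFamily :=
  .ofBool (fun x n => x + 1 != n)
    (Primrec.not.comp (Primrec.beq.comp (Primrec.succ.comp Primrec.fst) Primrec.snd)).to_comp
    fun n => ⟨n, by simp⟩

lemma mem_coSingletons {x n : ℕ} : x ∈ coSingletons.F n ↔ x + 1 ≠ n := by
  simp [coSingletons, IndexedFamily.ofBool]

lemma coSingletons_zero : coSingletons.F 0 = Set.univ := by
  ext x
  simp [mem_coSingletons]

lemma coSingletons_injective : Function.Injective coSingletons.F := by
  have key : ∀ n m, coSingletons.F n = coSingletons.F m → n ≤ m := fun n m h => by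
    by_contra! hmn
    have : n - 1 ∈ coSingletons.F m := mem_coSingletons.2 (by omega)
    exact mem_coSingletons.1 (h ▸ this) (by omega)
  exact fun n m h => le_antisymm (key n m h) (key m n h.symm)

noncomputable def initialAnswers (A : Set ℕ) (m : ℕ) : List Bool :=
  (List.range m).map fun q => decide (q ∈ A)

def coSingletonsGuess (ans : List Bool) : ℕ :=
  if ans.idxOf false < ans.length then ans.idxOf false + 1 else 0

lemma coSingletonsGuess_initialAnswers {n m : ℕ} (h : n ≤ m) :
    coSingletonsGuess (initialAnswers (coSingletons.F n) m) = n := by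
  unfold coSingletonsGuess initialAnswers
  rcases n with _ | k
  · simp [mem_coSingletons]
  · obtain ⟨j, rfl⟩ := Nat.exists_eq_add_of_le h
    rw [show k + 1 + j = k + (j + 1) by omega, List.range_add, List.map_append,
      List.idxOf_append_of_notMem (by simp [mem_coSingletons])]
    simp [List.range_succ_eq_map, mem_coSingletons]

/-- On input `σ`, query `0, …, |σ| - 1`, then output `coSingletonsGuess` of the answers. -/
def coSingletonsLearner : OMachine where
  step x := Part.some <|
    if x.2.length < x.1.length then 2 * x.2.length else 2 * coSingletonsGuess x.2 + 1
  partrec := by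
    refine Computable.partrec (Primrec.to_comp ?_)
    have hlen : Primrec fun x : List ℕ × List Bool => x.2.length :=
      Primrec.list_length.comp Primrec.snd
    have hidx : Primrec fun x : List ℕ × List Bool => x.2.idxOf false :=
      Primrec.list_idxOf.comp (Primrec.const false) Primrec.snd
    exact Primrec.ite (Primrec.nat_lt.comp hlen (Primrec.list_length.comp Primrec.fst))
      (Primrec.nat_double.comp hlen)
      (Primrec.nat_double_succ.comp
        (Primrec.ite (Primrec.nat_lt.comp hidx hlen) (Primrec.succ.comp hidx) (Primrec.const 0)))
  time x := Part.some (x.1.length + 2 * x.2.length + 1)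
  time_dom _ := Iff.rfl
  length_le_time := by
    intro x t ht
    obtain rfl := Part.mem_some_iff.1 ht
    omega
  queries_le_time := by
    intro x t ht
    obtain rfl := Part.mem_some_iff.1 ht
    omega
  size_le_time := by
    rintro ⟨σ, a⟩ t v ht hv
    obtain rfl := Part.mem_some_iff.1 ht
    obtain rfl := Part.mem_some_iff.1 hv
    refine (size_le_self _).trans ?_
    dsimp only
    unfold coSingletonsGuess
    split_ifs <;> omega
  time_mono := by
    rintro σ τ a b s t hστ hab hs ht
    obtain rfl := Part.mem_some_iff.1 hs
    obtain rfl := Part.mem_some_iff.1 ht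
    have := hστ.length_le
    have := hab.length_le
    simp only
    omega

lemma coSingletonsLearner_reach (A : Set ℕ) (σ : List ℕ) {j : ℕ} (hj : j ≤ σ.length) :
    coSingletonsLearner.Reach A σ (initialAnswers A j) := by
  induction j with
  | zero => exact .nil
  | succ j ih =>
    have := OMachine.Reach.query (q := j) (ih (by omega))
      (by simp [coSingletonsLearner, initialAnswers, show j < σ.length by omega])
    simpa [initialAnswers, List.range_succ] using this

lemma coSingletonsLearner_out (A : Set ℕ) (σ : List ℕ) :
    coSingletonsLearner.Out A σ (coSingletonsGuess (initialAnswers A σ.length))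
      (initialAnswers A σ.length) :=
  ⟨coSingletonsLearner_reach A σ le_rfl, by simp [coSingletonsLearner, initialAnswers]⟩

theorem psdo_coSingletons : PSDO coSingletons := by
  refine ⟨coSingletonsLearner, .X + 1, ?_⟩
  rintro _ ⟨n, rfl⟩ f -
  have hout : ∀ m, n ≤ m → coSingletonsLearner.Out (coSingletons.F n) (str f m) n
      (initialAnswers (coSingletons.F n) m) := fun m hm => by
    simpa [length_str, coSingletonsGuess_initialAnswers hm] using
      coSingletonsLearner_out (coSingletons.F n) (str f m)
  simp only [IndexedFamily.mi_apply_of_injective coSingletons_injective, Polynomial.eval_add,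
    Polynomial.eval_X, Polynomial.eval_one]
  refine ⟨n, rfl, n, fun m hm => ⟨_, hout m hm⟩, ?_, _, hout n le_rfl, by simp [initialAnswers]⟩
  calc (str f n).toFinset.card ≤ (str f n).length := List.toFinset_card_le _
    _ < n + 1 := by simp [length_str]

theorem not_psdt_coSingletons : ¬ PSDT coSingletons := by
  rintro ⟨M, T, p, hL⟩
  obtain ⟨σ, hσ⟩ := exists_locking_string (P := fun σ => M.eval (T.t σ) = Part.some 0)
    fun f hf => by
      obtain ⟨h, hFh, n, hset, -⟩ := hL _ ⟨0, rfl⟩ f (hf.trans coSingletons_zero.symm)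
      exact ⟨n, coSingletons_injective hFh ▸ hset⟩
  -- a number `k` missing from `σ`; a text of `ℕ \ {k}` starting with `σ` fools the learner
  set k := σ.sum + 1
  have hσk : ∀ x ∈ σ, x ∈ coSingletons.F (k + 1) := fun x hx =>
    mem_coSingletons.2 (by have := List.le_sum_of_mem hx; omega)
  obtain ⟨f, hf, hfσ⟩ := exists_isEnum_prepend hσk (coSingletons.nonempty _)
  obtain ⟨h, hFh, n, hset, -⟩ := hL _ ⟨k + 1, rfl⟩ f hf
  obtain ⟨τ, hτ⟩ : σ <+: str f (max n σ.length) := by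
    simpa [hfσ σ.length le_rfl] using str_prefix_str f (le_max_right n σ.length)
  have h0 : M.eval (T.t (str f _)) = _ := hset (max n σ.length) (le_max_left _ _)
  rw [← hτ, hσ τ, Part.some_inj] at h0
  subst h0
  exact absurd (coSingletons_injective hFh) (Nat.succ_ne_zero k).symm

open Nat.Partrec (Code)

/-- Program number `e` halts on input `0` within `s` steps. -/
def haltsWithin (e s : ℕ) : Bool :=
  (Code.evaln s (Denumerable.ofNat Code e) 0).isSome

lemma primrec_haltsWithin : Primrec₂ haltsWithin :=
  Primrec.option_isSome.comp <| Code.primrec_evaln.comp <|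
    (Primrec.snd.pair ((Primrec.ofNat Code).comp Primrec.fst)).pair (Primrec.const 0)

lemma eval_dom_iff_exists_haltsWithin (e : ℕ) :
    ((Denumerable.ofNat Code e).eval 0).Dom ↔ ∃ s, haltsWithin e s = true := by
  simp only [haltsWithin, Option.isSome_iff_exists, Part.dom_iff_mem, Code.evaln_complete]
  exact ⟨fun ⟨x, s, hs⟩ => ⟨s, x, hs⟩, fun ⟨s, x, hs⟩ => ⟨x, s, hs⟩⟩

lemma not_computablePred_eval_dom :
    ¬ ComputablePred fun e : ℕ => ((Denumerable.ofNat Code e).eval 0).Dom := fun h =>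
  ComputablePred.halting_problem 0 <|
    (ComputablePred.computable_of_manyOneReducible (.mk _ Computable.encode) h).of_eq
      fun c => by simp

def evens : Set ℕ := {x | x % 2 = 0}

/-- `x` is even, or codes a pair `⟪n - 1, s⟫` as `2 ⟪n - 1, s⟫ + 1` where program `n - 1` halts
within `s` steps. -/
def haltingMarkersMem (x n : ℕ) : Bool :=
  x % 2 == 0 || ((x / 2).unpair.1 + 1 == n && haltsWithin (x / 2).unpair.1 (x / 2).unpair.2)

lemma primrec_haltingMarkersMem : Primrec₂ haltingMarkersMem := by
  have hcode : Primrec fun q : ℕ × ℕ => (q.1 / 2).unpair :=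
    Primrec.unpair.comp (Primrec.nat_div.comp Primrec.fst (Primrec.const 2))
  exact Primrec.or.comp
    (Primrec.beq.comp (Primrec.nat_mod.comp Primrec.fst (Primrec.const 2)) (Primrec.const 0))
    (Primrec.and.comp
      (Primrec.beq.comp (Primrec.succ.comp (Primrec.fst.comp hcode)) Primrec.snd)
      (primrec_haltsWithin.comp (Primrec.fst.comp hcode) (Primrec.snd.comp hcode)))

def haltingMarkers : IndexedFamily :=
  .ofBool haltingMarkersMem primrec_haltingMarkersMem.to_comp fun _ => ⟨0, rfl⟩

lemma mem_haltingMarkers {x n : ℕ} : x ∈ haltingMarkers.F n ↔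
    x % 2 = 0 ∨ (x / 2).unpair.1 + 1 = n ∧ haltsWithin (x / 2).unpair.1 (x / 2).unpair.2 := by
  simp [haltingMarkers, IndexedFamily.ofBool, haltingMarkersMem]

lemma evens_subset_haltingMarkers (n : ℕ) : evens ⊆ haltingMarkers.F n :=
  fun _ hx => mem_haltingMarkers.2 (.inl hx)

lemma haltingMarkers_zero : haltingMarkers.F 0 = evens := by
  ext x
  simp [mem_haltingMarkers, evens]

lemma marker_mem_haltingMarkers {e s : ℕ} (h : haltsWithin e s) :
    2 * Nat.pair e s + 1 ∈ haltingMarkers.F (e + 1) :=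
  mem_haltingMarkers.2 (.inr (by simpa [Nat.mul_add_div] using h))

lemma eq_of_odd_mem_haltingMarkers {x n : ℕ} (hx : x % 2 = 1) (h : x ∈ haltingMarkers.F n) :
    (x / 2).unpair.1 + 1 = n ∧ haltsWithin (x / 2).unpair.1 (x / 2).unpair.2 := by
  simpa [mem_haltingMarkers, hx] using h

def oddTeacher : Teacher where
  t σ := σ.filter fun x => x % 2 = 1
  computable := (Primrec.listFilter (Primrec.eq.comp
    (Primrec.nat_mod.comp Primrec.id (Primrec.const 2)) (Primrec.const 1))).to_comp
  mono _ _ h := h.filter _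
  content_sub _ _ h := (List.mem_filter.1 h).1

def markerIndex (x : ℕ) : ℕ := (x / 2).unpair.1 + 1

def markerLearner : Machine where
  eval τ := Part.some ((τ.head?.map markerIndex).getD 0)
  partrec := Computable.partrec <| Primrec.to_comp <|
    Primrec.option_getD.comp (Primrec.option_map Primrec.list_head?
      (Primrec.succ.comp (Primrec.fst.comp (Primrec.unpair.comp
        (Primrec.nat_div.comp Primrec.snd (Primrec.const 2))))).to₂) (Primrec.const 0)
  time τ := Part.some (τ.length + τ.headI + 1)
  time_dom _ := Iff.rfl
  length_le_time := by
    intro τ t ht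
    obtain rfl := Part.mem_some_iff.1 ht
    omega
  size_le_time := by
    intro τ t h ht hh
    obtain rfl := Part.mem_some_iff.1 ht
    obtain rfl := Part.mem_some_iff.1 hh
    refine (size_le_self _).trans ?_
    rcases τ with _ | ⟨x, τ⟩
    · simp
    · have := Nat.unpair_left_le (x / 2)
      simp only [List.head?_cons, Option.map_some, Option.getD_some, List.headI_cons, markerIndex]
      omega
  time_mono := by
    intro σ τ s t hστ hs ht
    obtain rfl := Part.mem_some_iff.1 hs
    obtain rfl := Part.mem_some_iff.1 ht
    have := hστ.length_le
    have : σ.headI ≤ τ.headI := by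
      obtain ⟨ρ, rfl⟩ := hστ
      rcases σ with _ | ⟨x, σ⟩ <;> simp
    omega

theorem psdt_haltingMarkers : PSDT haltingMarkers := by
  refine ⟨markerLearner, oddTeacher, 2, ?_⟩
  rintro _ ⟨n, rfl⟩ f hf
  simp only [Polynomial.eval_ofNat]
  by_cases hodd : ∃ i, f i % 2 = 1
  · -- the first marker of the text settles the learner on the index it points to
    set P := Nat.find hodd
    have hP : oddTeacher.t (str f (P + 1)) = [f P] := by
      have : ∀ x ∈ str f P, x % 2 = 0 := fun x hx => by
        obtain ⟨i, hi, rfl⟩ := mem_str.1 hx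
        have := Nat.find_min hodd hi
        omega
      simpa [oddTeacher, str_succ, Nat.find_spec hodd, P] using this
    have hn : markerIndex (f P) = n :=
      (eq_of_odd_mem_haltingMarkers (Nat.find_spec hodd) (hf ▸ Set.mem_range_self P)).1
    refine ⟨n, rfl, P + 1, fun m hm => ?_, by simp [hP]⟩
    obtain ⟨ρ, hρ⟩ := hP ▸ oddTeacher.mono (str_prefix_str f hm)
    simp [markerLearner, ← hρ, hn]
  · -- no markers: the target is `evens` and the teacher stays silent
    simp only [not_exists] at hodd
    have hsilent : ∀ m, oddTeacher.t (str f m) = [] := fun m =>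
      List.filter_eq_nil_iff.2 fun x hx => by
        obtain ⟨i, -, rfl⟩ := mem_str.1 hx
        simpa using hodd i
    have hA : haltingMarkers.F n = evens := by
      refine subset_antisymm ?_ (evens_subset_haltingMarkers n)
      rw [← hf]
      rintro _ ⟨i, rfl⟩
      have := hodd i
      show f i % 2 = 0
      omega
    exact ⟨0, haltingMarkers_zero.trans hA.symm, 0, fun m _ => by simp [hsilent, markerLearner],
      by simp [hsilent]⟩

/-- `M` learns `𝓕` in the sense of `PSDO`, with the bound `p`. -/
def OMachine.PSDLearns (M : OMachine) (p : Polynomial ℕ) (𝓕 : IndexedFamily) : Prop :=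
  ∀ A, 𝓕.Mem A → ∀ f, IsEnum f A → ∃ h, 𝓕.F h = A ∧ M.PSDIdentifies A (str f) h (p.eval (𝓕.mi A))

lemma isEnum_two_mul : IsEnum (2 * ·) evens :=
  subset_antisymm (by rintro _ ⟨i, rfl⟩; show 2 * i % 2 = 0; omega)
    fun x (hx : x % 2 = 0) => ⟨x / 2, show 2 * (x / 2) = x by omega⟩

lemma setOf_mod_two_beq_zero : {q : ℕ | (q % 2 == 0) = true} = evens := by
  ext q
  simp [evens]

lemma OMachine.PSDLearns.exists_marker_query {M : OMachine} {p : Polynomial ℕ}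
    (hM : M.PSDLearns p haltingMarkers) {e s B h : ℕ} {qs : List ℕ} (hs : haltsWithin e s = true)
    (hB : p.eval (e + 1) ≤ B) (hh : haltingMarkers.F h = evens)
    (hsim : (h, qs) ∈ M.simulate (· % 2 == 0) (str (2 * ·) B)) :
    ∃ q ∈ qs, q % 2 = 1 ∧ q ∈ haltingMarkers.F (e + 1) := by
  set A := haltingMarkers.F (e + 1)
  set σ := str (2 * ·) B ++ [2 * Nat.pair e s + 1]
  have hσA : ∀ x ∈ σ, x ∈ A := by
    simp only [σ, List.mem_append, List.mem_singleton]
    rintro x (hx | rfl)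
    · exact evens_subset_haltingMarkers _ (isEnum_two_mul.mem hx)
    · exact marker_mem_haltingMarkers hs
  have hσ : σ.Nodup := by
    refine List.nodup_append.2 ⟨List.Nodup.map (fun _ _ h => by simpa using h) List.nodup_range,
      by simp, ?_⟩
    simp only [List.mem_singleton]
    rintro x hx _ rfl
    obtain ⟨i, -, rfl⟩ := mem_str.1 hx
    omega
  have hσlen : σ.length = B + 1 := by simp [σ, length_str]
  obtain ⟨f, hf, hfσ⟩ := exists_isEnum_prepend hσA (haltingMarkers.nonempty _)
  obtain ⟨h₁, hF₁, n₁, hset₁, hcard₁, -⟩ := hM A ⟨e + 1, rfl⟩ f hf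
  have hn₁ : n₁ ≤ B := by
    refine le_of_nodup_str (by rwa [hfσ _ hσlen.ge, List.take_of_length_le hσlen.le]) ?_
    have : p.eval (haltingMarkers.mi A) ≤ p.eval (e + 1) :=
      monotone_polynomial_eval p (IndexedFamily.mi_le rfl)
    omega
  obtain ⟨a, hout⟩ := hset₁ B hn₁
  rw [hfσ B (by omega), List.take_left' (length_str _ _)] at hout
  by_contra! hno
  have hagree : ∀ q ∈ qs, q ∈ A ↔ (q % 2 == 0) = true := fun q hq => by
    refine ⟨fun hqA => ?_, fun hq => evens_subset_haltingMarkers _ (by simpa [evens] using hq)⟩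
    have : q % 2 ≠ 1 := fun hodd => hno q hq hodd hqA
    simp only [beq_iff_eq]
    omega
  have hmk : 2 * Nat.pair e s + 1 ∈ evens := by
    rw [← hh, ← OMachine.eq_of_mem_simulate_of_out hsim hagree hout, hF₁]
    exact marker_mem_haltingMarkers hs
  exact absurd hmk (by simp [evens])

theorem not_psdo_haltingMarkers : ¬ PSDO haltingMarkers := by
  rintro ⟨M, p, hM : M.PSDLearns p haltingMarkers⟩
  obtain ⟨h₀, hF₀, n₀, hset₀, -⟩ := hM evens ⟨0, haltingMarkers_zero⟩ _ isEnum_two_mul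
  let B e := max n₀ (p.eval (e + 1))
  have hB : Primrec B :=
    Primrec.nat_max.comp (Primrec.const n₀) ((primrec_polynomial_eval p).comp Primrec.succ)
  -- the queries of the learner on the first `B e` even numbers, against the oracle for `evens`
  have hsim : ∀ e, ∃ qs, (h₀, qs) ∈ M.simulate (· % 2 == 0) (str (2 * ·) (B e)) := fun e => by
    obtain ⟨a, hout⟩ := hset₀ (B e) (le_max_left _ _)
    exact OMachine.Out.mem_simulate (setOf_mod_two_beq_zero ▸ hout)
  choose qs hqs using hsim
  have hqs_comp : Computable qs := Computable.snd.comp <|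
    (M.partrec_simulate _ (Primrec.beq.comp (Primrec.nat_mod.comp Primrec.id (Primrec.const 2))
      (Primrec.const 0))).comp
      (Primrec.list_map (Primrec.list_range.comp hB)
        (Primrec.nat_double.comp Primrec.snd).to₂).to_comp |>.of_eq_tot hqs
  -- a program halts iff one of these queries is one of its markers
  refine not_computablePred_eval_dom <| ComputablePred.computable_iff.2
    ⟨fun e => decide (∃ q ∈ qs e, q % 2 = 1 ∧ q ∈ haltingMarkers.F (e + 1)), ?_,
      funext fun e => propext ?_⟩
  · have hR : PrimrecRel fun q e => q % 2 = 1 ∧ q ∈ haltingMarkers.F (e + 1) :=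
      (Primrec.eq.comp (Primrec.nat_mod.comp Primrec.fst (Primrec.const 2)) (Primrec.const 1)).and
        (Primrec.eq.comp
          (primrec_haltingMarkersMem.comp Primrec.fst (Primrec.succ.comp Primrec.snd))
          (Primrec.const true))
    exact hR.exists_mem_list.decide.to_comp.comp hqs_comp Computable.id
  · simp only [decide_eq_true_iff, eval_dom_iff_exists_haltsWithin]
    refine ⟨fun ⟨s, hs⟩ => hM.exists_marker_query hs (le_max_right _ _) hF₀ (hqs e), ?_⟩
    rintro ⟨q, -, hodd, hq⟩
    obtain ⟨he, hs⟩ := eq_of_odd_mem_haltingMarkers hodd hq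
    exact ⟨_, Nat.succ_injective he ▸ hs⟩

/-- `PSD ⊊ PSD[O] ⊊ PSD[T,O]`, `PSD ⊊ PSD[T] ⊊ PSD[T,O]`,
`PSD[O] \ PSD[T] ≠ ∅` and `PSD[T] \ PSD[O] ≠ ∅`. -/
theorem stmt10 :
    ((∀ 𝓕 : IndexedFamily, PSD 𝓕 → PSDO 𝓕) ∧ (∃ 𝓕 : IndexedFamily, PSDO 𝓕 ∧ ¬ PSD 𝓕)) ∧
    ((∀ 𝓕 : IndexedFamily, PSDO 𝓕 → PSDTO 𝓕) ∧ (∃ 𝓕 : IndexedFamily, PSDTO 𝓕 ∧ ¬ PSDO 𝓕)) ∧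
    ((∀ 𝓕 : IndexedFamily, PSD 𝓕 → PSDT 𝓕) ∧ (∃ 𝓕 : IndexedFamily, PSDT 𝓕 ∧ ¬ PSD 𝓕)) ∧
    ((∀ 𝓕 : IndexedFamily, PSDT 𝓕 → PSDTO 𝓕) ∧ (∃ 𝓕 : IndexedFamily, PSDTO 𝓕 ∧ ¬ PSDT 𝓕)) ∧
    (∃ 𝓕 : IndexedFamily, PSDO 𝓕 ∧ ¬ PSDT 𝓕) ∧
    (∃ 𝓕 : IndexedFamily, PSDT 𝓕 ∧ ¬ PSDO 𝓕) := by
  have hG : PSDO coSingletons ∧ ¬ PSDT coSingletons :=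
    ⟨psdo_coSingletons, not_psdt_coSingletons⟩
  have hH : PSDT haltingMarkers ∧ ¬ PSDO haltingMarkers :=
    ⟨psdt_haltingMarkers, not_psdo_haltingMarkers⟩
  exact ⟨⟨fun _ => PSD.psdo, coSingletons, hG.1, fun h => hG.2 h.psdt⟩,
    ⟨fun _ => PSDO.psdto, haltingMarkers, hH.1.psdto, hH.2⟩,
    ⟨fun _ => PSD.psdt, haltingMarkers, hH.1, fun h => hH.2 h.psdo⟩,
    ⟨fun _ => PSDT.psdto, coSingletons, hG.1.psdto, hG.2⟩, ⟨_, hG⟩, ⟨_, hH⟩⟩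

end TeachLearn
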